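/- arXiv:1201.6222 — 6 statements merged into one kernel-verified Lean document; each statement's English description precedes it below -/
import Mathlib

section
/- Let u, v be positive integers with v < u, both powers of 2: v = 2^w, u = 2^t with w < t. Let b be an integer with u - v < b < u and b not a power of 2. Then b' = b + v satisfies u < b' and, if b' is not a power of 2, ltrim(b') ∈ ltrims(b). -/
/-- `lpow b` is the largest power of 2 not exceeding `b` (for `b ≥ 1`). -/
def lpow (b : ℕ) : ℕ := 2 ^ Nat.log 2 b

/-- `ltrim b = b - lpow b`.  Note `ltrim b = 0` iff `b` is a power of 2 (or `b = 0`). -/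
def ltrim (b : ℕ) : ℕ := b - lpow b

/-- `b` is a power of 2. -/
def pow2 (b : ℕ) : Prop := ∃ i : ℕ, b = 2 ^ i

/-- `ltrims a` is the set of iterated values `ltrim a, ltrim (ltrim a), …`,
stopping (exclusively) when a power of 2 is reached:
`ltrims a = ∅` if `a` is a power of 2, and `ltrims a = {ltrim a} ∪ ltrims (ltrim a)` otherwise. -/
def ltrims : ℕ → Finset ℕ
  | a =>
    if h : ltrim a = 0 then ∅
    else
      have ha : 0 < a := by
        rcases Nat.eq_zero_or_pos a with h0 | h0
        · exfalso; apply h; simp [h0, ltrim, lpow]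
        · exact h0
      have : ltrim a < a := Nat.sub_lt ha (Nat.pow_pos (by norm_num))
      insert (ltrim a) (ltrims (ltrim a))
  termination_by a => a

/-!
If `2^t - 2^w < b < 2^t` then the bits of `b` at positions `w, …, t-1` are all set, so
`b + 2^w = 2^t + b % 2^w` and `ltrim (b + 2^w) = b % 2^w`. On the other hand, stripping the
leading bits of `b` one at a time never changes `b % 2^w`, and after the bits at positions
`t-1, …, w` are gone what remains is exactly `b % 2^w`.
-/

lemma lpow_eq_of_le_of_lt {c k : ℕ} (h1 : 2 ^ k ≤ c) (h2 : c < 2 ^ (k + 1)) : lpow c = 2 ^ k := by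
  rw [lpow, Nat.log_eq_of_pow_le_of_lt_pow h1 h2]

lemma ltrim_eq_of_le_of_lt {c k : ℕ} (h1 : 2 ^ k ≤ c) (h2 : c < 2 ^ (k + 1)) :
    ltrim c = c - 2 ^ k := by
  rw [ltrim, lpow_eq_of_le_of_lt h1 h2]

lemma ltrim_modEq_two_pow {c w : ℕ} (hc : 2 ^ w ≤ c) : ltrim c ≡ c [MOD 2 ^ w] := by
  have hle : lpow c ≤ c := Nat.pow_log_le_self 2 ((Nat.two_pow_pos w).trans_le hc).ne'
  have hdvd : 2 ^ w ∣ lpow c := pow_dvd_pow 2 (Nat.le_log_of_pow_le (by norm_num) hc)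
  calc ltrim c ≡ ltrim c + lpow c [MOD 2 ^ w] := ((Nat.modEq_zero_iff_dvd.2 hdvd).add_left _).symm
    _ = c := Nat.sub_add_cancel hle

lemma ltrims_of_ltrim_ne_zero {a : ℕ} (h : ltrim a ≠ 0) :
    ltrims a = insert (ltrim a) (ltrims (ltrim a)) := by
  rw [ltrims, dif_neg h]

lemma mod_two_pow_mem_ltrims {w : ℕ} :
    ∀ {k c : ℕ}, w < k → 2 ^ k - 2 ^ w < c → c < 2 ^ k → c % 2 ^ w ∈ ltrims c
  | 0, _, hwk, _, _ => absurd hwk (Nat.not_lt_zero w)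
  | j + 1, c, hwk, h1, h2 => by
    have hwj : 2 ^ w ≤ 2 ^ j := Nat.pow_le_pow_right (by norm_num) (Nat.le_of_lt_succ hwk)
    have hpow : 2 ^ (j + 1) = 2 * 2 ^ j := by ring
    have htrim : ltrim c = c - 2 ^ j := ltrim_eq_of_le_of_lt (by omega) h2
    have hmod : ltrim c % 2 ^ w = c % 2 ^ w := ltrim_modEq_two_pow (by omega)
    rw [ltrims_of_ltrim_ne_zero (by omega), ← hmod]
    rcases (Nat.le_of_lt_succ hwk).eq_or_lt with rfl | hwj'
    · rw [Nat.mod_eq_of_lt (by omega)]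
      exact Finset.mem_insert_self _ _
    · exact Finset.mem_insert_of_mem (mod_two_pow_mem_ltrims hwj' (by omega) (by omega))

lemma ltrim_add_two_pow {w t b : ℕ} (hwt : w ≤ t) (h1 : 2 ^ t - 2 ^ w < b) (h2 : b < 2 ^ t) :
    ltrim (b + 2 ^ w) = b % 2 ^ w := by
  have hwt' : 2 ^ w ≤ 2 ^ t := Nat.pow_le_pow_right (by norm_num) hwt
  have hpow : 2 ^ (t + 1) = 2 * 2 ^ t := by ring
  have htrim : ltrim (b + 2 ^ w) = b + 2 ^ w - 2 ^ t := ltrim_eq_of_le_of_lt (by omega) (by omega)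
  have hmod : ltrim (b + 2 ^ w) ≡ b + 2 ^ w [MOD 2 ^ w] := ltrim_modEq_two_pow (by omega)
  rwa [Nat.ModEq, Nat.add_mod_right, Nat.mod_eq_of_lt (by omega)] at hmod

theorem stmt3_general (w t : ℕ) (hwt : w < t) (b : ℕ)
    (h1 : 2 ^ t - 2 ^ w < b) (h2 : b < 2 ^ t) :
    2 ^ t < b + 2 ^ w ∧ (¬ pow2 (b + 2 ^ w) → ltrim (b + 2 ^ w) ∈ ltrims b) := by
  refine ⟨by omega, fun _ => ?_⟩
  rw [ltrim_add_two_pow hwt.le h1 h2]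
  exact mod_two_pow_mem_ltrims hwt h1 h2

/-- Let `v = 2^w < u = 2^t` be powers of 2 and let `b` be a non-power-of-2 integer with
`u - v < b < u`.  Then `b' = b + v` satisfies `u < b'`, and if `b'` is not a power of 2
then `ltrim b' ∈ ltrims b`. -/
theorem stmt3 (w t : ℕ) (hwt : w < t) (b : ℕ)
    (h1 : 2 ^ t - 2 ^ w < b) (h2 : b < 2 ^ t) (hb : ¬ pow2 b) :
    2 ^ t < b + 2 ^ w ∧ (¬ pow2 (b + 2 ^ w) → ltrim (b + 2 ^ w) ∈ ltrims b) :=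
  stmt3_general w t hwt b h1 h2
end

section
/- If 2^t - 2^w < b < 2^t with w < t, then every binary digit of b at positions w, w+1, ..., t-1 equals 1. -/
/-- If `2^t - 2^w < b < 2^t` with `w < t`, then every binary digit of `b` at positions
`w, w+1, …, t-1` equals 1 (the digit of `b` at position `i` being `⌊b / 2^i⌋ % 2`). -/
theorem stmt4 (b t w : ℕ) (hwt : w < t)
    (h1 : 2 ^ t - 2 ^ w < b) (h2 : b < 2 ^ t) :
    ∀ i, w ≤ i → i < t → b / 2 ^ i % 2 = 1 := by
  intro i hwi hit
  have hwi' : (2:ℕ) ^ w ≤ 2 ^ i := Nat.pow_le_pow_right (by norm_num) hwi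
  have hsplit : (2:ℕ) ^ t = 2 ^ i * 2 ^ (t - i) := by
    rw [← pow_add]; congr 1; omega
  have hq : b / 2 ^ i = 2 ^ (t - i) - 1 := by
    have h1' : 2 ^ i * (2 ^ (t - i) - 1) ≤ b := by
      have : (1:ℕ) ≤ 2 ^ (t - i) := Nat.one_le_two_pow
      have hi : (2:ℕ) ^ i ≤ 2 ^ t := Nat.pow_le_pow_right (by norm_num) hit.le
      rw [Nat.mul_sub_one] at *
      omega
    have h2' : b < 2 ^ i * ((2 ^ (t - i) - 1) + 1) := by
      have : (1:ℕ) ≤ 2 ^ (t - i) := Nat.one_le_two_pow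
      have : (2 ^ (t - i) - 1) + 1 = 2 ^ (t - i) := by omega
      rw [this, ← hsplit]; exact h2
    exact Nat.div_eq_of_lt_le (by rwa [mul_comm] at h1') (by rwa [mul_comm] at h2')
  rw [hq]
  have ht : 1 ≤ t - i := by omega
  have : (2:ℕ) ^ (t - i) % 2 = 0 := by
    rcases Nat.exists_eq_add_of_le ht with ⟨k, hk⟩
    rw [hk, pow_add]; simp [Nat.mul_mod]
  have hpos : (1:ℕ) ≤ 2 ^ (t - i) := Nat.one_le_two_pow
  omega
end

section
/- Consider finite sequences of nonzero integers with face operators ∂_0 (delete first entry), ∂_k (delete last entry), and ∂_i (replace a_i, a_{i+1} by their sum) for 0 < i < k, where a resulting zero entry makes the simplex degenerate. The Eilenberg–MacLane vector field V_EML maps a sequence σ = [a_1|...|a_k] with a_1 ∉ {1} to [1|a_1-1|a_2|...|a_k] if a_1 > 1 and to [1|a_1|a_2|...|a_k] if a_1 < 0. Then for every source σ (a_1 ≠ 1, σ not the empty sequence), σ is a regular face of V_EML(σ): there is exactly one index i with ∂_i V_EML(σ) = σ. -/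
/-- The face operator `∂ᵢ` on a simplex `[a_1 | ⋯ | a_k]` of `K(ℤ,1)` (a list of `k`
integers): `∂_0` deletes the first entry, `∂_k` deletes the last entry, and for
`0 < i < k`, `∂ᵢ` replaces the entries `a_i, a_{i+1}` by their sum. -/
def faceZ (i : ℕ) (l : List ℤ) : List ℤ :=
  if i = 0 then l.tail
  else if i = l.length then l.dropLast
  else l.take (i - 1) ++ [l.getD (i - 1) 0 + l.getD i 0] ++ l.drop (i + 1)

/-- The Eilenberg–MacLane vector field on `K(ℤ,1)`: it sends `[a_1 | a_2 | ⋯ | a_k]`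
(with `a_1 ≠ 1`) to `[1 | a_1 - 1 | a_2 | ⋯ | a_k]` if `a_1 > 1` and to
`[1 | a_1 | a_2 | ⋯ | a_k]` if `a_1 < 0`. -/
def Veml (l : List ℤ) : List ℤ :=
  match l with
  | [] => []
  | a :: rest => if 1 < a then 1 :: (a - 1) :: rest else 1 :: a :: rest

lemma head_faceZ (x y : ℤ) (t : List ℤ) (n : ℕ) :
    (faceZ (n+2) (x :: y :: t)).head? = some x := by
  unfold faceZ
  rw [if_neg (by omega : ¬ n+2 = 0)]
  split <;> simp [List.take_succ_cons]

/-- For every source simplex `σ` of the Eilenberg–MacLane field (a nonempty sequence of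
nonzero integers with first entry `≠ 1`), `σ` is a regular face of `V_EML(σ)`: there is
exactly one index `i` with `∂ᵢ V_EML(σ) = σ`. -/
theorem stmt7 (l : List ℤ) (a : ℤ) (rest : List ℤ) (hl : l = a :: rest)
    (hnz : ∀ x ∈ l, x ≠ 0) (ha : a ≠ 1) :
    ∃! i : ℕ, i ≤ (Veml l).length ∧ faceZ i (Veml l) = l := by
  subst hl
  by_cases h : 1 < a
  · refine ⟨1, ⟨by simp [Veml, h], ?_⟩, ?_⟩
    · simp only [Veml, if_pos h, faceZ]
      norm_num
    · rintro i ⟨hi, hf⟩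
      simp only [Veml, if_pos h] at hf
      match i with
      | 0 => simp [faceZ] at hf
      | 1 => rfl
      | n+2 =>
        have h2 := head_faceZ 1 (a-1) rest n
        rw [hf] at h2
        simp at h2
        omega
  · refine ⟨0, ⟨by simp, ?_⟩, ?_⟩
    · simp [Veml, h, faceZ]
    · rintro i ⟨hi, hf⟩
      simp only [Veml, if_neg h] at hf
      match i with
      | 0 => rfl
      | 1 => simp [faceZ] at hf
      | n+2 =>
        have h2 := head_faceZ 1 a rest n
        rw [hf] at h2
        simp at h2
        omega
end

section
/- In the bubblesort field V_bs: let σ = [b_0, ..., b_k] be a source simplex (consecutive entries distinct, not strictly increasing, and its leading alternating segment b_ℓ, ..., b_m ends with the smaller value u). Let τ = V_bs(σ) = [b_0, ..., b_m, v, b_{m+1}, ..., b_k], obtained by inserting v = b_ℓ right after position m. Then ∂_{m+1}τ = σ, and m+1 is the unique index i with ∂_iτ = σ; i.e., σ is a regular face of τ. -/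
/-- A tuple representative `[b_0, …, b_k]` of a simplex of `K(ℤ,1)` is nondegenerate iff
consecutive entries are distinct. -/
def nondegZ (l : List ℤ) : Prop :=
  ∀ i, i + 1 < l.length → l.getD i 0 ≠ l.getD (i + 1) 0

/-- `ℓ` is the leading index of the tuple `[b_0, …, b_k]`: the smallest index with
`b_ℓ > b_{ℓ+1}`. -/
def leadIdx (l : List ℤ) (ℓ : ℕ) : Prop :=
  ℓ + 1 < l.length ∧ (∀ i < ℓ, l.getD i 0 < l.getD (i + 1) 0) ∧
    l.getD (ℓ + 1) 0 < l.getD ℓ 0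

/-- `b_ℓ, …, b_m` is the leading alternating segment of the tuple: with `v = b_ℓ`,
`u = b_{ℓ+1}`, it is the maximal contiguous segment starting at position `ℓ` containing
only the values `u` and `v`. -/
def las (l : List ℤ) (ℓ m : ℕ) : Prop :=
  ℓ + 1 ≤ m ∧ m < l.length ∧
    (∀ i, ℓ ≤ i → i ≤ m → l.getD i 0 = l.getD ℓ 0 ∨ l.getD i 0 = l.getD (ℓ + 1) 0) ∧
    (m + 1 = l.length ∨
      (l.getD (m + 1) 0 ≠ l.getD ℓ 0 ∧ l.getD (m + 1) 0 ≠ l.getD (ℓ + 1) 0))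

/-- The bubblesort vector field, as a relation: `vbsRel σ τ` holds iff `σ` is a source
simplex (its leading alternating segment `b_ℓ, …, b_m` ends with the smaller value `u`)
and `τ = V_bs σ` is obtained from `σ` by inserting another `v = b_ℓ` right after
position `m`. -/
def vbsRel (σ τ : List ℤ) : Prop :=
  ∃ ℓ m, leadIdx σ ℓ ∧ las σ ℓ m ∧ σ.getD m 0 = σ.getD (ℓ + 1) 0 ∧
    τ = σ.insertIdx (m + 1) (σ.getD ℓ 0)

/-!
If `τ = V_bs σ` is `σ` with `v` inserted at position `m + 1`, deleting an index `i < m + 1`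
from `τ` moves `τ_{i+1}` to position `i`: for `i < m` this is `b_{i+1}`, which differs from
`b_i` by nondegeneracy, and for `i = m` it is the inserted `v`, which differs from `b_m = u`.
Deleting an index `i > m + 1` leaves `v` at position `m + 1`, whereas by maximality of the
leading alternating segment `b_{m+1}` is either absent or different from `v`.
-/

namespace List

variable {α : Type*} {l : List α} {x d : α} {i n : ℕ}

theorem getD_eq_getD_succ_of_eraseIdx_insertIdx_eq (h : (l.insertIdx n x).eraseIdx i = l)
    (hi : i + 1 < n) : l.getD i d = l.getD (i + 1) d := by
  nth_rw 1 [← h]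
  simp only [getD_eq_getElem?_getD, getElem?_eraseIdx_of_ge le_rfl, getElem?_insertIdx_of_lt hi]

theorem getD_eq_of_eraseIdx_insertIdx_succ_eq (h : (l.insertIdx (i + 1) x).eraseIdx i = l)
    (hi : i < l.length) : l.getD i d = x := by
  rw [← h, getD_eq_getElem?_getD, getElem?_eraseIdx_of_ge le_rfl, getElem?_insertIdx_self,
    if_pos (show i + 1 ≤ l.length from hi), Option.getD_some]

theorem getD_eq_of_eraseIdx_insertIdx_eq_of_lt (h : (l.insertIdx n x).eraseIdx i = l)
    (hni : n < i) (hn : n ≤ l.length) : l.getD n d = x := by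
  rw [← h, getD_eq_getElem?_getD, getElem?_eraseIdx_of_lt hni, getElem?_insertIdx_self,
    if_pos hn, Option.getD_some]

end List

/-- For a source simplex `σ = [b_0, …, b_k]` of the bubblesort field with leading
alternating segment ending at position `m`, and `τ = V_bs σ` obtained by inserting
`v = b_ℓ` after position `m`, we have `∂_{m+1} τ = σ`, and `m+1` is the unique index `i`
with `∂ᵢ τ = σ`; i.e. `σ` is a regular face of `τ`.  (Faces of a tuple are obtained by
deleting one component.) -/
theorem stmt11 (b : List ℤ) (ℓ m : ℕ)
    (hnd : nondegZ b) (hlead : leadIdx b ℓ) (hlas : las b ℓ m)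
    (hsrc : b.getD m 0 = b.getD (ℓ + 1) 0) :
    (b.insertIdx (m + 1) (b.getD ℓ 0)).eraseIdx (m + 1) = b ∧
    ∀ i < (b.insertIdx (m + 1) (b.getD ℓ 0)).length,
      (b.insertIdx (m + 1) (b.getD ℓ 0)).eraseIdx i = b → i = m + 1 := by
  obtain ⟨-, -, hvu⟩ := hlead
  obtain ⟨-, hm, -, hmax⟩ := hlas
  refine ⟨List.eraseIdx_insertIdx_self _, fun i hi h => ?_⟩
  rcases lt_trichotomy i (m + 1) with hlt | rfl | hgt
  · rcases Nat.lt_succ_iff_lt_or_eq.1 hlt with hlt | rfl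
    · exact absurd (List.getD_eq_getD_succ_of_eraseIdx_insertIdx_eq h (by omega))
        (hnd i (by omega))
    · have hv : b.getD i 0 = b.getD ℓ 0 := List.getD_eq_of_eraseIdx_insertIdx_succ_eq h hm
      omega
  · rfl
  · have hv : b.getD (m + 1) 0 = b.getD ℓ 0 :=
      List.getD_eq_of_eraseIdx_insertIdx_eq_of_lt h hgt hm
    rw [List.length_insertIdx_of_le_length hm] at hi
    rcases hmax with hlen | ⟨hne, -⟩
    · omega
    · exact absurd hv hne
end

section
/- Any simplex reachable from a k-dimensional source simplex σ in the V∂-graph of the bubblesort field V_bs has all its tuple components among the components of σ; consequently at most (k+1)^{k+1} distinct source simplices are reachable from σ. -/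
/-- A source simplex of the bubblesort field. -/
def isSrcBS (l : List ℤ) : Prop := nondegZ l ∧ ∃ τ, vbsRel l τ

/-- A target simplex of the bubblesort field. -/
def isTgtBS (l : List ℤ) : Prop := ∃ σ, nondegZ σ ∧ vbsRel σ l

/-- The edges of the `V∂`-graph of the bubblesort field: from a source `σ` to `V_bs σ`,
and from a target `τ` to any nondegenerate face `∂ᵢτ` (deletion of the `i`-th component)
that is a source or critical simplex not matched to `τ`. -/
def edgeBS (x y : List ℤ) : Prop :=
  (isSrcBS x ∧ vbsRel x y) ∨
  (isTgtBS x ∧ ∃ i < x.length, y = x.eraseIdx i ∧ nondegZ y ∧ ¬ vbsRel y x ∧ ¬ isTgtBS y)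

namespace List

variable {α : Type*}

theorem getD_insertIdx_of_lt (l : List α) (x d : α) {i j : ℕ} (h : j < i) :
    (l.insertIdx i x).getD j d = l.getD j d := by
  simp only [getD_eq_getElem?_getD, getElem?_insertIdx_of_lt h]

theorem getD_insertIdx_self (l : List α) (x d : α) {i : ℕ} (h : i ≤ l.length) :
    (l.insertIdx i x).getD i d = x := by
  simp only [getD_eq_getElem?_getD, getElem?_insertIdx_self, if_pos h, Option.getD_some]

theorem getD_insertIdx_add_one_of_le (l : List α) (x d : α) {i j : ℕ} (h : i ≤ j) :
    (l.insertIdx i x).getD (j + 1) d = l.getD j d := by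
  simp only [getD_eq_getElem?_getD, getElem?_insertIdx_of_gt (Nat.lt_succ_of_le h),
    Nat.succ_sub_one]

theorem setOf_length_eq_subset_subset_range (s : List α) (k : ℕ) :
    {τ : List α | τ.length = k ∧ τ ⊆ s} ⊆
      Set.range fun f : Fin k → Fin s.length => ofFn fun i => s.get (f i) := by
  rintro τ ⟨rfl, hτ⟩
  choose f hf using fun i : Fin τ.length => mem_iff_get.1 (hτ (τ.get_mem i))
  exact ⟨f, ext_get (by simp) fun i _ h => by simpa using hf ⟨i, h⟩⟩

theorem finite_setOf_length_eq_subset (s : List α) (k : ℕ) :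
    {τ : List α | τ.length = k ∧ τ ⊆ s}.Finite :=
  (Set.finite_range _).subset (setOf_length_eq_subset_subset_range s k)

theorem ncard_setOf_length_eq_subset_le (s : List α) (k : ℕ) :
    {τ : List α | τ.length = k ∧ τ ⊆ s}.ncard ≤ s.length ^ k := by
  set F := fun f : Fin k → Fin s.length => ofFn fun i => s.get (f i)
  calc {τ : List α | τ.length = k ∧ τ ⊆ s}.ncard
      ≤ (F '' Set.univ).ncard := by
        rw [Set.image_univ]
        exact Set.ncard_le_ncard (setOf_length_eq_subset_subset_range s k) (Set.finite_range F)
    _ ≤ (Set.univ : Set (Fin k → Fin s.length)).ncard := Set.ncard_image_le Set.finite_univ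
    _ = s.length ^ k := by rw [Set.ncard_univ, Nat.card_fun, Nat.card_fin, Nat.card_fin]

end List

theorem leadIdx.eq_of_getD_eq {l l' : List ℤ} {ℓ ℓ' : ℕ} (h : leadIdx l ℓ) (h' : leadIdx l' ℓ')
    (hagree : ∀ i ≤ ℓ + 1, l'.getD i 0 = l.getD i 0) : ℓ' = ℓ := by
  obtain ⟨-, hasc, hdesc⟩ := h
  obtain ⟨-, hasc', hdesc'⟩ := h'
  rcases lt_trichotomy ℓ' ℓ with hlt | heq | hgt
  · have := hasc ℓ' hlt
    rw [← hagree ℓ' (by omega), ← hagree (ℓ' + 1) (by omega)] at this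
    exact absurd this hdesc'.not_gt
  · exact heq
  · have := hasc' ℓ hgt
    rw [hagree ℓ (by omega), hagree (ℓ + 1) le_rfl] at this
    exact absurd this hdesc.not_gt

theorem las.le {l : List ℤ} {ℓ m m' : ℕ} (h : las l ℓ m) (h' : las l ℓ m') : m' ≤ m := by
  obtain ⟨hℓm, -, -, hend | ⟨hv, hu⟩⟩ := h
  · have := h'.2.1; omega
  · by_contra! hlt
    rcases h'.2.2.1 (m + 1) (by omega) hlt with h1 | h1
    exacts [hv h1, hu h1]

theorem las.unique {l : List ℤ} {ℓ m m' : ℕ} (h : las l ℓ m) (h' : las l ℓ m') : m' = m :=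
  le_antisymm (h.le h') (h'.le h)

theorem las_insertIdx {σ : List ℤ} {ℓ m : ℕ} (h : las σ ℓ m) :
    las (σ.insertIdx (m + 1) (σ.getD ℓ 0)) ℓ (m + 1) := by
  obtain ⟨hℓm, hm, hseg, hend⟩ := h
  set v := σ.getD ℓ 0
  have hpre : ∀ i ≤ m, (σ.insertIdx (m + 1) v).getD i 0 = σ.getD i 0 :=
    fun i hi => σ.getD_insertIdx_of_lt v 0 (Nat.lt_succ_of_le hi)
  refine ⟨by omega, by rw [List.length_insertIdx_of_le_length hm]; omega, ?_, ?_⟩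
  · intro i hℓi him
    rw [hpre ℓ (by omega), hpre (ℓ + 1) hℓm]
    rcases Nat.lt_or_eq_of_le him with hi | rfl
    · rw [hpre i (Nat.le_of_lt_succ hi)]
      exact hseg i hℓi (Nat.le_of_lt_succ hi)
    · exact .inl (σ.getD_insertIdx_self v 0 hm)
  · rw [List.length_insertIdx_of_le_length hm, hpre ℓ (by omega), hpre (ℓ + 1) hℓm,
      σ.getD_insertIdx_add_one_of_le v 0 le_rfl]
    exact hend.imp (congrArg (· + 1)) id

theorem not_vbsRel_of_vbsRel {σ x τ : List ℤ} (hσx : vbsRel σ x) : ¬ vbsRel x τ := by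
  rintro ⟨ℓ', m', hℓ', hm', hend', -⟩
  obtain ⟨ℓ, m, hℓ, hm, -, rfl⟩ := hσx
  have hpre : ∀ i ≤ m, (σ.insertIdx (m + 1) (σ.getD ℓ 0)).getD i 0 = σ.getD i 0 :=
    fun i hi => σ.getD_insertIdx_of_lt _ 0 (Nat.lt_succ_of_le hi)
  obtain rfl : ℓ' = ℓ := hℓ.eq_of_getD_eq hℓ' fun i hi => hpre i (hi.trans hm.1)
  obtain rfl : m' = m + 1 := (las_insertIdx hm).unique hm'
  rw [σ.getD_insertIdx_self _ 0 hm.2.1, hpre (ℓ' + 1) hm.1] at hend'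
  exact hℓ.2.2.ne' hend'

theorem isTgtBS.not_isSrcBS {x : List ℤ} (hx : isTgtBS x) : ¬ isSrcBS x := by
  obtain ⟨σ, -, hσx⟩ := hx
  rintro ⟨-, τ, hxτ⟩
  exact not_vbsRel_of_vbsRel hσx hxτ

theorem vbsRel.subset {σ τ : List ℤ} (h : vbsRel σ τ) : τ ⊆ σ := by
  obtain ⟨ℓ, m, hℓ, hm, -, rfl⟩ := h
  intro z hz
  rcases (List.mem_insertIdx hm.2.1).1 hz with rfl | hz
  · have hℓσ : ℓ < σ.length := by have := hℓ.1; omega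
    rw [List.getD_eq_getElem _ _ hℓσ]
    exact List.getElem_mem hℓσ
  · exact hz

theorem vbsRel.length_eq {σ τ : List ℤ} (h : vbsRel σ τ) : τ.length = σ.length + 1 := by
  obtain ⟨ℓ, m, -, hm, -, rfl⟩ := h
  exact List.length_insertIdx_of_le_length hm.2.1 _

theorem edgeBS.subset {x y : List ℤ} (h : edgeBS x y) : y ⊆ x := by
  rcases h with ⟨-, hxy⟩ | ⟨-, i, -, rfl, -⟩
  exacts [hxy.subset, List.eraseIdx_subset]

theorem edgeBS.isTgtBS_length {x y : List ℤ} (h : edgeBS x y) :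
    (¬ isTgtBS x ∧ isTgtBS y ∧ y.length = x.length + 1) ∨
      (isTgtBS x ∧ ¬ isTgtBS y ∧ y.length + 1 = x.length) := by
  rcases h with ⟨hx, hxy⟩ | ⟨hx, i, hi, rfl, -, -, hy⟩
  · exact .inl ⟨fun ht => ht.not_isSrcBS hx, ⟨x, hx.1, hxy⟩, hxy.length_eq⟩
  · exact .inr ⟨hx, hy, by rw [List.length_eraseIdx_of_lt hi]; omega⟩

theorem subset_of_reflTransGen_edgeBS {σ τ : List ℤ} (h : Relation.ReflTransGen edgeBS σ τ) :
    τ ⊆ σ := by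
  induction h with
  | refl => exact List.Subset.refl σ
  | tail _ hbc ih => exact List.Subset.trans hbc.subset ih

theorem length_of_reflTransGen_edgeBS {σ τ : List ℤ} (hσ : ¬ isTgtBS σ)
    (h : Relation.ReflTransGen edgeBS σ τ) :
    (¬ isTgtBS τ ∧ τ.length = σ.length) ∨ (isTgtBS τ ∧ τ.length = σ.length + 1) := by
  induction h with
  | refl => exact .inl ⟨hσ, rfl⟩
  | tail _ hbc ih =>
    rcases hbc.isTgtBS_length with ⟨hb, hc, hlen⟩ | ⟨hb, hc, hlen⟩ <;> grind

/-- Every simplex reachable from a source simplex `σ` in the `V∂`-graph of the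
bubblesort field has all its components among the components of `σ`; consequently the
set of source simplices reachable from a `k`-dimensional `σ` (a tuple of `k+1` entries)
is finite, of cardinality at most `(k+1)^(k+1)`. -/
theorem stmt13 (σ : List ℤ) (hσ : isSrcBS σ) :
    (∀ τ, Relation.ReflTransGen edgeBS σ τ → ∀ z ∈ τ, z ∈ σ) ∧
    {τ | Relation.ReflTransGen edgeBS σ τ ∧ isSrcBS τ}.Finite ∧
    {τ | Relation.ReflTransGen edgeBS σ τ ∧ isSrcBS τ}.ncard ≤ σ.length ^ σ.length := by
  have hsub : {τ | Relation.ReflTransGen edgeBS σ τ ∧ isSrcBS τ} ⊆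
      {τ | τ.length = σ.length ∧ τ ⊆ σ} := by
    rintro τ ⟨hστ, hτ⟩
    refine ⟨?_, subset_of_reflTransGen_edgeBS hστ⟩
    rcases length_of_reflTransGen_edgeBS (fun h => h.not_isSrcBS hσ) hστ with ⟨-, h⟩ | ⟨h, -⟩
    exacts [h, absurd hτ h.not_isSrcBS]
  have hfin := List.finite_setOf_length_eq_subset σ σ.length
  exact ⟨fun τ => subset_of_reflTransGen_edgeBS, hfin.subset hsub,
    (Set.ncard_le_ncard hsub hfin).trans (List.ncard_setOf_length_eq_subset_le σ σ.length)⟩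
end

section
/- The bit-chipping field V_bc on K(N,1) is a valid discrete vector field whose only critical simplices are [] and [1]: every nondegenerate simplex σ = [a_1|...|a_k] with all a_i ≥ 1, other than [] and [1], is either a source (matched upward) or a target (matched downward), the matching is a bijection between sources and targets, and for each pair (σ, τ = V_bc(σ)), σ is a regular face of τ. -/
/-- All entries of the sequence are positive (nondegenerate simplex of `K(ℕ,1)`). -/
def posL (l : List ℕ) : Prop := ∀ a ∈ l, 1 ≤ a

/-- The length `q` of the dyadic part of `[a_1 | ⋯ | a_k]`: the largest `q` such that
`a_1, …, a_q` are all powers of 2. -/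
def dyLen (l : List ℕ) : ℕ :=
  (l.takeWhile fun a => a == 2 ^ Nat.log 2 a).length

/-- `l` is fully dyadic: all entries are powers of 2. -/
def fullyDyadic (l : List ℕ) : Prop := dyLen l = l.length

/-- Source simplices of type (a) of the bit-chipping field: not fully dyadic, with no
peak, i.e. the dyadic part `a_1 ≤ ⋯ ≤ a_q` is nondecreasing and (if nonempty) its last
entry is smaller than the breakpoint value `a_{q+1}`. -/
def srcA (l : List ℕ) : Prop :=
  dyLen l < l.length ∧
  (∀ i, i + 1 < dyLen l → l.getD i 0 ≤ l.getD (i + 1) 0) ∧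
  (∀ i, i + 1 = dyLen l → l.getD i 0 < l.getD (dyLen l) 0)

/-- The bit-chipping field on a type (a) source: split the breakpoint value `b` into
`lpow b | ltrim b`. -/
def VbcA (l : List ℕ) : List ℕ :=
  l.take (dyLen l) ++ [lpow (l.getD (dyLen l) 0), ltrim (l.getD (dyLen l) 0)] ++
    l.drop (dyLen l + 1)

/-- Source simplices of type (b) of the bit-chipping field: fully dyadic sequences
`a_1 ≤ ⋯ ≤ a_{k-1} < a_k` with `a_k ≥ 2`. -/
def srcB (l : List ℕ) : Prop :=
  fullyDyadic l ∧ l ≠ [] ∧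
  (∀ i, i + 2 < l.length → l.getD i 0 ≤ l.getD (i + 1) 0) ∧
  (∀ i, i + 2 = l.length → l.getD i 0 < l.getD (i + 1) 0) ∧
  2 ≤ l.getD (l.length - 1) 0

/-- The bit-chipping field on a type (b) source: split the last entry into two equal
halves. -/
def VbcB (l : List ℕ) : List ℕ :=
  l.dropLast ++ [l.getD (l.length - 1) 0 / 2, l.getD (l.length - 1) 0 / 2]

/-- The bit-chipping vector field `V_bc`, as a relation: `VbcRel σ τ` iff `σ` is a
source (of type (a) or (b)) and `τ = V_bc σ`. -/
def VbcRel (σ τ : List ℕ) : Prop :=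
  (srcA σ ∧ τ = VbcA σ) ∨ (srcB σ ∧ τ = VbcB σ)

/-- The face operator `∂ᵢ` on a simplex `[a_1 | ⋯ | a_k]` of `K(ℕ,1)`: `∂_0` deletes the
first entry, `∂_k` the last, and for `0 < i < k`, `∂ᵢ` replaces `a_i, a_{i+1}` by their
sum. -/
def faceN (i : ℕ) (l : List ℕ) : List ℕ :=
  if i = 0 then l.tail
  else if i = l.length then l.dropLast
  else l.take (i - 1) ++ [l.getD (i - 1) 0 + l.getD i 0] ++ l.drop (i + 1)

/-!
`V_bc` splits one entry `c` of a source into two positive parts `x | y` with `x + y = c`.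
The image of a type (a) source has a descent `lpow c > ltrim c` right after a nondecreasing run
of powers of two (`DescentAt`); the image of a type (b) source is fully dyadic, nondecreasing,
and ends in a plateau `t | t` (`IsPlateau`). Sources have neither shape, the two shapes exclude
each other and the descent position is unique, so merging `x | y` back (a face operator) inverts
`V_bc`. Conversely, a positive sequence other than `[]`, `[1]` that is not a source either has a
first descent inside its dyadic prefix or is a nondecreasing dyadic sequence ending in a plateau,
and merging there produces its source. Regularity: every other face leaves `x` or `y`, not
`x + y`, at the merge position.
-/

theorem Nat.isPowerOfTwo_iff_eq_two_pow_log {a : ℕ} : a.isPowerOfTwo ↔ a = 2 ^ Nat.log 2 a := by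
  refine ⟨?_, fun h => ⟨_, h⟩⟩
  rintro ⟨k, rfl⟩
  rw [Nat.log_pow one_lt_two]

theorem isPowerOfTwo_lpow (b : ℕ) : (lpow b).isPowerOfTwo := ⟨_, rfl⟩

theorem lpow_eq_self {b : ℕ} (hb : b.isPowerOfTwo) : lpow b = b :=
  (Nat.isPowerOfTwo_iff_eq_two_pow_log.mp hb).symm

theorem lpow_le_self {b : ℕ} (hb : b ≠ 0) : lpow b ≤ b := Nat.pow_log_le_self 2 hb

theorem lt_two_mul_lpow (b : ℕ) : b < 2 * lpow b := by
  have := Nat.lt_pow_succ_log_self one_lt_two b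
  rw [pow_succ] at this
  unfold lpow
  omega

theorem lpow_add_ltrim {b : ℕ} (hb : b ≠ 0) : lpow b + ltrim b = b := by
  have := lpow_le_self hb
  unfold ltrim
  omega

theorem ltrim_lt_lpow (b : ℕ) : ltrim b < lpow b := by
  have := lt_two_mul_lpow b
  unfold ltrim
  omega

theorem ltrim_ne_zero {b : ℕ} (hb0 : b ≠ 0) (hb : ¬ b.isPowerOfTwo) : ltrim b ≠ 0 := by
  have hne : lpow b ≠ b := fun h => hb (h ▸ isPowerOfTwo_lpow b)
  have := lpow_le_self hb0
  unfold ltrim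
  omega

theorem lpow_add_of_lt {c d : ℕ} (hc : c.isPowerOfTwo) (hdc : d < c) : lpow (c + d) = c := by
  obtain ⟨k, rfl⟩ := hc
  rw [lpow, Nat.log_eq_of_pow_le_of_lt_pow (m := k) (by omega) (by rw [pow_succ]; omega)]

theorem ltrim_add_of_lt {c d : ℕ} (hc : c.isPowerOfTwo) (hdc : d < c) : ltrim (c + d) = d := by
  rw [ltrim, lpow_add_of_lt hc hdc, Nat.add_sub_cancel_left]

theorem not_isPowerOfTwo_add {c d : ℕ} (hc : c.isPowerOfTwo) (hd : d ≠ 0) (hdc : d < c) :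
    ¬ (c + d).isPowerOfTwo := fun h => by
  have := lpow_eq_self h
  rw [lpow_add_of_lt hc hdc] at this
  omega

theorem le_lpow {b c : ℕ} (hc : c.isPowerOfTwo) (hcb : c ≤ b) : c ≤ lpow b := by
  rw [← lpow_eq_self hc]
  exact Nat.pow_le_pow_right two_pos (Nat.log_mono_right hcb)

theorem isPowerOfTwo_div_two {a : ℕ} (ha : a.isPowerOfTwo) (h2 : 2 ≤ a) :
    (a / 2).isPowerOfTwo ∧ a / 2 * 2 = a := by
  obtain ⟨_ | k, rfl⟩ := ha
  · simp at h2
  · rw [pow_succ, Nat.mul_div_cancel _ two_pos]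
    exact ⟨⟨k, rfl⟩, rfl⟩

theorem two_mul_le_of_lt {a c : ℕ} (hc : c.isPowerOfTwo) (ha : a.isPowerOfTwo) (hca : c < a) :
    2 * c ≤ a := by
  obtain ⟨i, rfl⟩ := hc
  obtain ⟨j, rfl⟩ := ha
  rw [← pow_succ']
  exact Nat.pow_le_pow_right two_pos ((Nat.pow_lt_pow_iff_right one_lt_two).mp hca)

theorem List.exists_eq_append_cons_of_lt {α : Type*} {l : List α} {n : ℕ} (h : n < l.length) :
    ∃ A b B, l = A ++ b :: B ∧ A.length = n :=
  ⟨l.take n, l[n], l.drop (n + 1), by rw [← List.drop_eq_getElem_cons h, List.take_append_drop],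
    by simp; omega⟩

theorem List.exists_eq_append_cons_cons_of_lt {α : Type*} {l : List α} {n : ℕ}
    (h : n + 1 < l.length) : ∃ A x y B, l = A ++ x :: y :: B ∧ A.length = n := by
  obtain ⟨A, x, _ | ⟨y, B⟩, rfl, rfl⟩ := l.exists_eq_append_cons_of_lt (n := n) (by omega)
  · simp at h
  · exact ⟨A, x, y, B, rfl, rfl⟩

theorem List.getD_append_cons_of_lt {α : Type*} {A B : List α} {b d : α} {i : ℕ}
    (h : i < A.length) : (A ++ b :: B).getD i d = A.getD i d :=
  List.getD_append _ _ _ _ h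

theorem List.getD_mem {α : Type*} {l : List α} {i : ℕ} (h : i < l.length) (d : α) :
    l.getD i d ∈ l :=
  List.getD_eq_getElem l d h ▸ List.getElem_mem h

theorem getD_ne_zero_of_posL {l : List ℕ} (hl : posL l) {i : ℕ} (hi : i < l.length) :
    l.getD i 0 ≠ 0 :=
  Nat.one_le_iff_ne_zero.mp (hl _ (List.getD_mem hi 0))

@[simp] theorem dyLen_nil : dyLen [] = 0 := rfl

@[simp] theorem dyLen_cons (a : ℕ) (l : List ℕ) :
    dyLen (a :: l) = if a.isPowerOfTwo then dyLen l + 1 else 0 := by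
  have : (a == 2 ^ Nat.log 2 a) = decide a.isPowerOfTwo := by
    rw [Bool.eq_iff_iff]; simp [Nat.isPowerOfTwo_iff_eq_two_pow_log]
  by_cases ha : a.isPowerOfTwo <;> simp [dyLen, this, ha]

theorem dyLen_spec (l : List ℕ) :
    (∀ i < dyLen l, (l.getD i 0).isPowerOfTwo) ∧ ¬ (l.getD (dyLen l) 0).isPowerOfTwo := by
  induction l with
  | nil => simp [Nat.not_isPowerOfTwo_zero]
  | cons a l ih =>
    by_cases ha : a.isPowerOfTwo
    · refine ⟨fun i hi => ?_, by simpa [ha] using ih.2⟩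
      cases i with
      | zero => simpa using ha
      | succ i => simpa using ih.1 i (by simp [ha] at hi; omega)
    · simp [ha]

theorem lt_dyLen_iff {l : List ℕ} {q : ℕ} :
    q < dyLen l ↔ ∀ i ≤ q, (l.getD i 0).isPowerOfTwo := by
  refine ⟨fun h i hi => (dyLen_spec l).1 i (by omega), fun h => ?_⟩
  by_contra! hq
  exact (dyLen_spec l).2 (h _ hq)

theorem dyLen_eq_iff {l : List ℕ} {q : ℕ} :
    dyLen l = q ↔ (∀ i < q, (l.getD i 0).isPowerOfTwo) ∧ ¬ (l.getD q 0).isPowerOfTwo := by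
  refine ⟨fun h => h ▸ dyLen_spec l, fun ⟨hlt, hq⟩ => ?_⟩
  have : ¬ dyLen l < q := fun h => (dyLen_spec l).2 (hlt _ h)
  have : ¬ q < dyLen l := fun h => hq ((dyLen_spec l).1 q h)
  omega

theorem dyLen_le_length (l : List ℕ) : dyLen l ≤ l.length := by
  by_contra! h
  have := (dyLen_spec l).1 _ h
  rw [List.getD_eq_default _ _ le_rfl] at this
  exact Nat.not_isPowerOfTwo_zero this

theorem fullyDyadic_iff {l : List ℕ} : fullyDyadic l ↔ ∀ a ∈ l, a.isPowerOfTwo := by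
  induction l with
  | nil => simp [fullyDyadic]
  | cons a l ih =>
    by_cases ha : a.isPowerOfTwo <;> simp [fullyDyadic, ha, ← ih]

theorem posL_of_fullyDyadic {l : List ℕ} (hl : fullyDyadic l) : posL l :=
  fun a ha => Nat.pos_of_isPowerOfTwo (fullyDyadic_iff.mp hl a ha)

/-- `a_1 ≤ ⋯ ≤ a_n`: the entries of index `< n` are nondecreasing. -/
def NondecreasingUpTo (l : List ℕ) (n : ℕ) : Prop :=
  ∀ i, i + 1 < n → l.getD i 0 ≤ l.getD (i + 1) 0

theorem nondecreasingUpTo_or_exists_descent (l : List ℕ) (n : ℕ) :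
    NondecreasingUpTo l n ∨
      ∃ p, p + 1 < n ∧ NondecreasingUpTo l (p + 1) ∧ l.getD (p + 1) 0 < l.getD p 0 := by
  induction n with
  | zero => exact Or.inl fun i hi => by omega
  | succ n ih =>
    rcases ih with hn | ⟨p, hp, hmono, hdesc⟩
    · by_cases hstep : n = 0 ∨ l.getD (n - 1) 0 ≤ l.getD n 0
      · refine Or.inl fun i hi => ?_
        rcases Nat.lt_or_ge (i + 1) n with h | h
        · exact hn i h
        · obtain rfl : i = n - 1 := by omega
          rw [Nat.sub_add_cancel (by omega)]
          exact hstep.resolve_left (by omega)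
      · push Not at hstep
        refine Or.inr ⟨n - 1, by omega, by rwa [Nat.sub_add_cancel (by omega)], ?_⟩
        rw [Nat.sub_add_cancel (by omega)]
        exact hstep.2
    · exact Or.inr ⟨p, by omega, hmono, hdesc⟩

theorem srcA_iff {l : List ℕ} :
    srcA l ↔ dyLen l < l.length ∧ NondecreasingUpTo l (dyLen l + 1) := by
  refine ⟨fun ⟨hlen, hmono, hlast⟩ => ⟨hlen, fun i hi => ?_⟩, fun ⟨hlen, hmono⟩ =>
    ⟨hlen, fun i hi => hmono i (by omega), fun i hi => ?_⟩⟩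
  · rcases Nat.lt_or_ge (i + 1) (dyLen l) with h | h
    · exact hmono i h
    · have hi' : i + 1 = dyLen l := by omega
      rw [hi']
      exact (hlast i hi').le
  · -- a power of two below the first non-power cannot equal it
    have hpow := (dyLen_spec l).1 i (by omega)
    have hle := hmono i (by omega)
    rw [hi] at hle
    refine lt_of_le_of_ne hle fun heq => (dyLen_spec l).2 ?_
    rwa [← heq]

/-- Shape of `V_bc σ` for a type (a) source `σ`. -/
def DescentAt (l : List ℕ) (p : ℕ) : Prop :=
  p + 1 < l.length ∧ p < dyLen l ∧ NondecreasingUpTo l (p + 1) ∧ l.getD (p + 1) 0 < l.getD p 0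

/-- Shape of `V_bc σ` for a type (b) source `σ`. -/
def IsPlateau (l : List ℕ) : Prop :=
  fullyDyadic l ∧ 2 ≤ l.length ∧ NondecreasingUpTo l l.length ∧
    l.getD (l.length - 2) 0 = l.getD (l.length - 1) 0

theorem DescentAt.unique {l : List ℕ} {p q : ℕ} (hp : DescentAt l p) (hq : DescentAt l q) :
    p = q := by
  by_contra hne
  rcases Nat.lt_or_gt_of_ne hne with h | h
  · exact absurd (hq.2.2.1 p (by omega)) (not_le.mpr hp.2.2.2)
  · exact absurd (hp.2.2.1 q (by omega)) (not_le.mpr hq.2.2.2)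

theorem IsPlateau.not_descentAt {l : List ℕ} (hl : IsPlateau l) {p : ℕ} : ¬ DescentAt l p :=
  fun hp => absurd (hl.2.2.1 p hp.1) (not_le.mpr hp.2.2.2)

theorem faceN_append_cons_cons (A B : List ℕ) (x y : ℕ) :
    faceN (A.length + 1) (A ++ x :: y :: B) = A ++ (x + y) :: B := by
  simp [faceN, List.drop_append, Nat.add_assoc]

theorem getD_faceN_of_le {l : List ℕ} {i j : ℕ} (hi : i < l.length) (hij : i ≤ j) :
    (faceN i l).getD j 0 = l.getD (j + 1) 0 := by
  rcases Nat.eq_zero_or_pos i with rfl | hi0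
  · cases l <;> simp [faceN]
  obtain ⟨A, x, y, B, rfl, hA⟩ := List.exists_eq_append_cons_cons_of_lt (n := i - 1)
    (show i - 1 + 1 < l.length by omega)
  obtain ⟨k, rfl⟩ : ∃ k, j = A.length + 1 + k := ⟨j - (A.length + 1), by omega⟩
  rw [show i = A.length + 1 by omega, faceN_append_cons_cons,
    List.getD_append_right _ _ _ _ (by omega), List.getD_append_right _ _ _ _ (by omega),
    show A.length + 1 + k - A.length = k + 1 by omega,
    show A.length + 1 + k + 1 - A.length = k + 2 by omega]
  simp

theorem getD_faceN_of_lt {l : List ℕ} {i j : ℕ} (hi : i ≤ l.length) (hji : j + 1 < i) :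
    (faceN i l).getD j 0 = l.getD j 0 := by
  rcases Nat.lt_or_ge i l.length with hlt | hge
  · obtain ⟨A, x, y, B, rfl, hA⟩ := List.exists_eq_append_cons_cons_of_lt (n := i - 1)
      (show i - 1 + 1 < l.length by omega)
    rw [show i = A.length + 1 by omega, faceN_append_cons_cons,
      List.getD_append_cons_of_lt (by omega), List.getD_append_cons_of_lt (by omega)]
  · obtain rfl : i = l.length := by omega
    rw [faceN, if_neg (by omega), if_pos rfl]
    grind

theorem faceN_append_cons_cons_eq_iff {A B : List ℕ} {x y i : ℕ} (hx : x ≠ 0) (hy : y ≠ 0)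
    (hi : i ≤ (A ++ x :: y :: B).length) :
    faceN i (A ++ x :: y :: B) = A ++ (x + y) :: B ↔ i = A.length + 1 := by
  refine ⟨fun h => ?_, fun h => h ▸ faceN_append_cons_cons A B x y⟩
  -- the merged entry `x + y` sits at index `A.length`; any other face has `x` or `y` there
  have hmerged := congrArg (List.getD · A.length 0) h
  by_contra hne
  rcases Nat.lt_or_ge A.length i with hlt | hle
  · rw [getD_faceN_of_lt hi (by omega)] at hmerged
    simp at hmerged
    omega
  · rw [getD_faceN_of_le (by simp; omega) hle] at hmerged
    simp at hmerged
    omega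

theorem VbcA_eq_append {σ : List ℕ} (h : dyLen σ < σ.length) :
    ∃ A b B, σ = A ++ b :: B ∧ A.length = dyLen σ ∧ ¬ b.isPowerOfTwo ∧
      VbcA σ = A ++ lpow b :: ltrim b :: B := by
  obtain ⟨A, b, B, rfl, hA⟩ := List.exists_eq_append_cons_of_lt h
  refine ⟨A, b, B, rfl, hA, ?_, by simp [VbcA, ← hA]⟩
  simpa [← hA] using (dyLen_spec (A ++ b :: B)).2

theorem descentAt_VbcA {σ : List ℕ} (h : srcA σ) : DescentAt (VbcA σ) (dyLen σ) := by
  obtain ⟨hlen, hmono⟩ := srcA_iff.mp h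
  obtain ⟨A, b, B, rfl, hA, -, hV⟩ := VbcA_eq_append hlen
  have hpowA : ∀ i < A.length, (A.getD i 0).isPowerOfTwo := fun i hi => by
    rw [← List.getD_append_cons_of_lt (b := b) (B := B) hi]
    exact (dyLen_spec _).1 i (by omega)
  rw [hV, ← hA]
  rw [← hA] at hmono
  refine ⟨by simp, lt_dyLen_iff.mpr fun i hi => ?_, fun i hi => ?_, by simpa using ltrim_lt_lpow b⟩
  · rcases Nat.lt_or_ge i A.length with hi' | hi'
    · rw [List.getD_append_cons_of_lt hi']
      exact hpowA i hi'
    · obtain rfl : i = A.length := by omega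
      simpa using isPowerOfTwo_lpow b
  · have hσ := hmono i hi
    rcases Nat.lt_or_ge (i + 1) A.length with hi' | hi'
    · grind
    · -- the last power of two before `b` is also at most `lpow b`
      have := le_lpow (hpowA i (by omega)) (b := b) (by grind)
      grind

theorem faceN_VbcA {σ : List ℕ} (hσ : posL σ) (h : dyLen σ < σ.length) :
    faceN (dyLen σ + 1) (VbcA σ) = σ := by
  obtain ⟨A, b, B, rfl, hA, -, hV⟩ := VbcA_eq_append h
  have hb : b ≠ 0 := by have := hσ b (by simp); omega
  rw [hV, ← hA, faceN_append_cons_cons, lpow_add_ltrim hb]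

theorem VbcB_eq_append {σ : List ℕ} (h : srcB σ) :
    ∃ A a, σ = A ++ [a] ∧ a.isPowerOfTwo ∧ 2 ≤ a ∧ VbcB σ = A ++ [a / 2, a / 2] := by
  obtain ⟨hdy, hne, -, -, h2⟩ := h
  obtain ⟨A, a, rfl⟩ := (List.eq_nil_or_concat' σ).resolve_left hne
  exact ⟨A, a, rfl, fullyDyadic_iff.mp hdy a (by simp), by simpa using h2, by simp [VbcB]⟩

theorem isPlateau_VbcB {σ : List ℕ} (h : srcB σ) : IsPlateau (VbcB σ) := by
  obtain ⟨A, a, rfl, ha, h2, hV⟩ := VbcB_eq_append h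
  obtain ⟨hdy, -, hmono, hlast, -⟩ := h
  obtain ⟨hhalf, -⟩ := isPowerOfTwo_div_two ha h2
  have hpowA : ∀ x ∈ A, x.isPowerOfTwo := fun x hx => fullyDyadic_iff.mp hdy x (by simp [hx])
  rw [hV]
  refine ⟨fullyDyadic_iff.mpr ?_, by simp, fun i hi => ?_, by simp⟩
  · simp only [List.mem_append, List.mem_cons, List.not_mem_nil, or_false]
    rintro x (hx | rfl | rfl)
    exacts [hpowA x hx, hhalf, hhalf]
  · simp only [List.length_append, List.length_cons, List.length_nil] at hi hmono hlast
    rcases Nat.lt_or_ge (i + 1) A.length with hi' | hi'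
    · have := hmono i (by omega)
      grind
    rcases Nat.lt_or_ge i A.length with hi'' | hi''
    · -- the power of two just below `a` is at most `a / 2`
      have hlt := hlast i (by omega)
      have := two_mul_le_of_lt (hpowA _ (List.getD_mem hi'' 0)) ha (c := A.getD i 0) (by grind)
      grind
    · obtain rfl : i = A.length := by omega
      simp

theorem faceN_VbcB {σ : List ℕ} (h : srcB σ) : faceN ((VbcB σ).length - 1) (VbcB σ) = σ := by
  obtain ⟨A, a, rfl, ha, h2, hV⟩ := VbcB_eq_append h
  have := (isPowerOfTwo_div_two ha h2).2
  rw [hV, show (A ++ [a / 2, a / 2]).length - 1 = A.length + 1 by simp, faceN_append_cons_cons]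
  congr
  omega

theorem exists_srcA_of_descentAt {τ : List ℕ} (hτ : posL τ) {p : ℕ} (h : DescentAt τ p) :
    ∃ σ, posL σ ∧ srcA σ ∧ VbcA σ = τ := by
  obtain ⟨hlen, hdy, hmono, hdesc⟩ := h
  obtain ⟨A, x, y, B, rfl, rfl⟩ := List.exists_eq_append_cons_cons_of_lt hlen
  simp at hdesc
  have hpow := lt_dyLen_iff.mp hdy
  have hx : x.isPowerOfTwo := by simpa using hpow A.length le_rfl
  have hy : y ≠ 0 := by have := hτ y (by simp); omega
  have hdyσ : dyLen (A ++ (x + y) :: B) = A.length := by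
    refine dyLen_eq_iff.mpr ⟨fun i hi => ?_, by simpa using not_isPowerOfTwo_add hx hy hdesc⟩
    have := hpow i hi.le
    rwa [List.getD_append_cons_of_lt hi] at this ⊢
  refine ⟨A ++ (x + y) :: B, fun z hz => ?_, srcA_iff.mpr ⟨by simp [hdyσ], ?_⟩, ?_⟩
  · simp only [List.mem_append, List.mem_cons] at hz
    rcases hz with hz | rfl | hz
    · exact hτ z (by simp [hz])
    · omega
    · exact hτ z (by simp [hz])
  · rw [hdyσ]
    intro i hi
    have := hmono i hi
    grind
  · simp [VbcA, hdyσ, lpow_add_of_lt hx hdesc, ltrim_add_of_lt hx hdesc]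

theorem exists_srcB_of_isPlateau {τ : List ℕ} (h : IsPlateau τ) :
    ∃ σ, posL σ ∧ srcB σ ∧ VbcB σ = τ := by
  obtain ⟨hdy, hlen, hmono, hlast⟩ := h
  obtain ⟨A, x, y, B, rfl, hA⟩ :=
    List.exists_eq_append_cons_cons_of_lt (l := τ) (n := τ.length - 2) (by omega)
  obtain rfl : B = [] := List.length_eq_zero_iff.mp (by simp at hA; omega)
  obtain rfl : x = y := by simpa [show A.length + 2 - 2 = A.length by omega] using hlast
  have hpow := fullyDyadic_iff.mp hdy
  have hx : x.isPowerOfTwo := hpow x (by simp)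
  have hx0 := Nat.pos_of_isPowerOfTwo hx
  have hσ : fullyDyadic (A ++ [x + x]) := by
    refine fullyDyadic_iff.mpr fun z hz => ?_
    simp only [List.mem_append, List.mem_cons, List.not_mem_nil, or_false] at hz
    rcases hz with hz | rfl
    · exact hpow z (by simp [hz])
    · simpa [← two_mul, mul_comm] using Nat.isPowerOfTwo_mul_two_of_isPowerOfTwo hx
  refine ⟨A ++ [x + x], posL_of_fullyDyadic hσ, ⟨hσ, by simp, fun i hi => ?_, fun i hi => ?_,
    by simp; omega⟩, by simp [VbcB]; omega⟩
  · have := hmono i (by simp at hi ⊢; omega)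
    grind
  · have := hmono i (by simp at hi ⊢; omega)
    grind

theorem descentAt_or_isPlateau_of_not_source {l : List ℕ} (hl : posL l) (hne : l ≠ [])
    (h1 : l ≠ [1]) (hA : ¬ srcA l) (hB : ¬ srcB l) : (∃ p, DescentAt l p) ∨ IsPlateau l := by
  have hdyl := dyLen_le_length l
  rcases nondecreasingUpTo_or_exists_descent l (min (dyLen l + 1) l.length) with
    hmono | ⟨p, hp, hmono, hdesc⟩
  swap
  · exact Or.inl ⟨p, by omega, by omega, hmono, hdesc⟩
  have hdy : fullyDyadic l := by
    by_contra hlt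
    unfold fullyDyadic at hlt
    exact hA (srcA_iff.mpr ⟨by omega, by rwa [min_eq_left (by omega)] at hmono⟩)
  rw [min_eq_right (by unfold fullyDyadic at hdy; omega)] at hmono
  have hlen : 1 ≤ l.length := List.length_pos_iff.mpr hne
  have hlast_pos : 1 ≤ l.getD (l.length - 1) 0 := by
    have := getD_ne_zero_of_posL hl (i := l.length - 1) (by omega); omega
  have hsrcB : (∀ i, i + 2 = l.length → l.getD i 0 < l.getD (i + 1) 0) →
      2 ≤ l.getD (l.length - 1) 0 → srcB l :=
    fun hstrict h2 => ⟨hdy, hne, fun i hi => hmono i (by omega), hstrict, h2⟩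
  have hlen2 : 2 ≤ l.length := by
    by_contra hlt
    obtain ⟨a, rfl⟩ := List.length_eq_one_iff.mp (show l.length = 1 by omega)
    have ha : a ≠ 1 := fun h => h1 (h ▸ rfl)
    exact hB (hsrcB (fun i hi => by simp at hi) (by simp at hlast_pos ⊢; omega))
  have hstep := hmono (l.length - 2) (by omega)
  rw [show l.length - 2 + 1 = l.length - 1 by omega] at hstep
  refine Or.inr ⟨hdy, hlen2, hmono, ?_⟩
  by_contra hne2
  have hpen_pos := getD_ne_zero_of_posL hl (i := l.length - 2) (by omega)
  refine hB (hsrcB (fun i hi => ?_) (by omega))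
  rw [show i = l.length - 2 by omega, show l.length - 2 + 1 = l.length - 1 by omega]
  omega

theorem not_descentAt_of_source {l : List ℕ} (hl : srcA l ∨ srcB l) {p : ℕ} :
    ¬ DescentAt l p := by
  rintro ⟨hlen, hdy, -, hdesc⟩
  have : l.getD p 0 ≤ l.getD (p + 1) 0 := by
    rcases hl with hA | ⟨-, -, hmono, hstrict, -⟩
    · exact (srcA_iff.mp hA).2 p (by omega)
    · rcases Nat.lt_or_ge (p + 2) l.length with h | h
      · exact hmono p h
      · exact (hstrict p (by omega)).le
  omega

theorem not_isPlateau_of_source {l : List ℕ} (hl : srcA l ∨ srcB l) : ¬ IsPlateau l := by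
  rintro ⟨hdy, hlen, -, hlast⟩
  rcases hl with ⟨hq, -, -⟩ | ⟨-, -, -, hstrict, -⟩
  · unfold fullyDyadic at hdy
    omega
  · have := hstrict (l.length - 2) (by omega)
    rw [show l.length - 2 + 1 = l.length - 1 by omega] at this
    omega

theorem exists_VbcRel_iff {σ : List ℕ} : (∃ τ, VbcRel σ τ) ↔ srcA σ ∨ srcB σ := by
  refine ⟨fun ⟨τ, h⟩ => h.imp And.left And.left, ?_⟩
  rintro (h | h)
  exacts [⟨_, Or.inl ⟨h, rfl⟩⟩, ⟨_, Or.inr ⟨h, rfl⟩⟩]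

theorem descentAt_or_isPlateau_of_VbcRel {σ τ : List ℕ} (h : VbcRel σ τ) :
    DescentAt τ (dyLen σ) ∨ IsPlateau τ := by
  rcases h with ⟨hA, rfl⟩ | ⟨hB, rfl⟩
  exacts [Or.inl (descentAt_VbcA hA), Or.inr (isPlateau_VbcB hB)]

theorem two_le_length_of_VbcRel {σ τ : List ℕ} (h : VbcRel σ τ) : 2 ≤ τ.length := by
  rcases descentAt_or_isPlateau_of_VbcRel h with h | h
  exacts [by have := h.1; omega, h.2.1]

theorem exists_VbcRel_iff_not_target {l : List ℕ} (hl : posL l) (hne : l ≠ []) (h1 : l ≠ [1]) :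
    (∃ τ, VbcRel l τ) ↔ ¬ ∃ σ, posL σ ∧ VbcRel σ l := by
  have htarget : (∃ σ, posL σ ∧ VbcRel σ l) ↔ (∃ p, DescentAt l p) ∨ IsPlateau l := by
    refine ⟨fun ⟨σ, _, h⟩ => (descentAt_or_isPlateau_of_VbcRel h).imp_left (⟨_, ·⟩), ?_⟩
    rintro (⟨p, hp⟩ | hp)
    · obtain ⟨σ, hσ, hA, rfl⟩ := exists_srcA_of_descentAt hl hp
      exact ⟨σ, hσ, Or.inl ⟨hA, rfl⟩⟩
    · obtain ⟨σ, hσ, hB, rfl⟩ := exists_srcB_of_isPlateau hp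
      exact ⟨σ, hσ, Or.inr ⟨hB, rfl⟩⟩
  rw [exists_VbcRel_iff, htarget]
  refine ⟨fun hs ht => ?_, fun ht => ?_⟩
  · rcases ht with ⟨p, hp⟩ | hp
    exacts [not_descentAt_of_source hs hp, not_isPlateau_of_source hs hp]
  · by_contra hs
    push Not at hs
    exact ht (descentAt_or_isPlateau_of_not_source hl hne h1 hs.1 hs.2)

theorem VbcRel_left_unique {σ σ' τ : List ℕ} (hσ : posL σ) (hσ' : posL σ') (h : VbcRel σ τ)
    (h' : VbcRel σ' τ) : σ = σ' := by
  rcases h with ⟨hA, rfl⟩ | ⟨hB, rfl⟩ <;> rcases h' with ⟨hA', h'⟩ | ⟨hB', h'⟩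
  · have hq := (descentAt_VbcA hA).unique (h' ▸ descentAt_VbcA hA')
    rw [← faceN_VbcA hσ hA.1, ← faceN_VbcA hσ' hA'.1, h', hq]
  · exact ((h' ▸ isPlateau_VbcB hB').not_descentAt (descentAt_VbcA hA)).elim
  · exact ((isPlateau_VbcB hB).not_descentAt (h' ▸ descentAt_VbcA hA')).elim
  · rw [← faceN_VbcB hB, ← faceN_VbcB hB', h']

theorem VbcRel_right_unique {σ τ τ' : List ℕ} (h : VbcRel σ τ) (h' : VbcRel σ τ') : τ = τ' := by
  have hAB : ¬ (srcA σ ∧ srcB σ) := by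
    rintro ⟨⟨hq, -⟩, hdy, -⟩
    unfold fullyDyadic at hdy
    omega
  rcases h with ⟨hA, rfl⟩ | ⟨hB, rfl⟩ <;> rcases h' with ⟨hA', rfl⟩ | ⟨hB', rfl⟩
  exacts [rfl, absurd ⟨hA, hB'⟩ hAB, absurd ⟨hA', hB⟩ hAB, rfl]

theorem existsUnique_faceN_eq_of_VbcRel {σ τ : List ℕ} (hσ : posL σ) (h : VbcRel σ τ) :
    ∃! i, i ≤ τ.length ∧ faceN i τ = σ := by
  suffices ∃ A x y B, x ≠ 0 ∧ y ≠ 0 ∧ τ = A ++ x :: y :: B ∧ σ = A ++ (x + y) :: B by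
    obtain ⟨A, x, y, B, hx, hy, rfl, rfl⟩ := this
    exact ⟨A.length + 1, ⟨by simp, faceN_append_cons_cons A B x y⟩,
      fun i ⟨hi, he⟩ => (faceN_append_cons_cons_eq_iff hx hy hi).mp he⟩
  rcases h with ⟨hA, rfl⟩ | ⟨hB, rfl⟩
  · obtain ⟨A, b, B, rfl, -, hb, hV⟩ := VbcA_eq_append hA.1
    have hb0 : b ≠ 0 := by have := hσ b (by simp); omega
    exact ⟨A, _, _, B, (Nat.pos_of_isPowerOfTwo (isPowerOfTwo_lpow b)).ne', ltrim_ne_zero hb0 hb,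
      hV, by rw [lpow_add_ltrim hb0]⟩
  · obtain ⟨A, a, rfl, ha, h2, hV⟩ := VbcB_eq_append hB
    have := (isPowerOfTwo_div_two ha h2).2
    exact ⟨A, a / 2, a / 2, [], by omega, by omega, hV, by congr; omega⟩

/-- The bit-chipping field is a valid discrete vector field on `K(ℕ,1)` whose only
critical simplices are `[]` and `[1]`: every nondegenerate simplex other than `[]` and
`[1]` is a source iff it is not a target (so it is exactly one of the two), `[]` and
`[1]` are neither sources nor targets, the matching is a bijection between sources and
targets, and each source is a regular face of its matched target. -/
theorem stmt15 :
    (∀ l : List ℕ, posL l → l ≠ [] → l ≠ [1] →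
      ((∃ τ, VbcRel l τ) ↔ ¬ ∃ σ, posL σ ∧ VbcRel σ l)) ∧
    (¬ ∃ τ, VbcRel [] τ) ∧ (¬ ∃ σ, posL σ ∧ VbcRel σ []) ∧
    (¬ ∃ τ, VbcRel [1] τ) ∧ (¬ ∃ σ, posL σ ∧ VbcRel σ [1]) ∧
    (∀ σ σ' τ, posL σ → posL σ' → VbcRel σ τ → VbcRel σ' τ → σ = σ') ∧
    (∀ σ τ τ', VbcRel σ τ → VbcRel σ τ' → τ = τ') ∧
    (∀ σ τ, posL σ → VbcRel σ τ → ∃! i : ℕ, i ≤ τ.length ∧ faceN i τ = σ) := by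
  refine ⟨fun l hl hne h1 => exists_VbcRel_iff_not_target hl hne h1, ?_, ?_, ?_, ?_,
    fun σ σ' τ hσ hσ' => VbcRel_left_unique hσ hσ', fun σ τ τ' => VbcRel_right_unique,
    fun σ τ hσ => existsUnique_faceN_eq_of_VbcRel hσ⟩
  · rintro ⟨τ, ⟨⟨h, -⟩, -⟩ | ⟨⟨-, h, -⟩, -⟩⟩
    exacts [by simp at h, h rfl]
  · rintro ⟨σ, -, h⟩
    simpa using two_le_length_of_VbcRel h
  · rintro ⟨τ, ⟨⟨h, -⟩, -⟩ | ⟨⟨-, -, -, -, h⟩, -⟩⟩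
    exacts [by simp [Nat.isPowerOfTwo_one] at h, by simp at h]
  · rintro ⟨σ, -, h⟩
    simpa using two_le_length_of_VbcRel h
end
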